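/- arXiv:2001.05771 — 2 statements merged into one kernel-verified Lean document; each statement's English description precedes it below -/
import Mathlib

section
/- Let v ∈ L²((0,π), ℂ), α ∈ ℝ, and define W(λ) = ∫₀^π (sin λx/λ) conj(v(x)) dx + ∫₀^π (sin λ(π−x)/λ) conj(v(x)) dx, N(λ) = ∫₀^π (cos λt − cos λ(π−t)) v(t) dt, F(λ) = ∫₀^π (sin λ(π−x)/λ)(∫₀^x cos(λt) v(t) dt) conj(v(x)) dx, and G(λ) = ∫₀^π (∫₀^x (sin λ(x−t)/λ) v(t) dt) conj(v(x)) dx. Then for every λ ∈ ℂ with λ ≠ 0 and Δ(0,λ) ≠ 0, one has Δ(0,λ) + 2α·[ W(λ)N(λ)/Δ(0,λ) − F(λ) − F*(λ) − G(λ) ] = Δ(0,λ) + (α/(2iλ))·(R(λ) − R(−λ)). -/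
/-!
Writing sin and cos through `e^{±iλx}`, every quantity in the identity becomes a combination,
with coefficients in `P = e^{iλπ}`, of the moments `∫₀^π e^{μx} f(x) dx` and the iterated moments
`∫₀^π (∫₀^x e^{νt} g(t) dt) e^{μx} f(x) dx`, for `f, g ∈ {v, v̄}` and `μ, ν = ±iλ`. By Fubini,
the two iterated moments obtained from each other by exchanging `(f, μ)` and `(g, ν)` add up to a
product of moments. After this substitution, and with `Δ(0,λ) = (1 - P)(1 - P⁻¹)`, the claim is a
rational identity in `P`.
-/

open MeasureTheory intervalIntegral

/-- Fourier transform `ṽ(λ) = ∫₀^π e^{-iλx} v(x) dx`. -/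
noncomputable def ftilde (v : ℝ → ℂ) (l : ℂ) : ℂ :=
  ∫ x in (0:ℝ)..Real.pi, Complex.exp (-Complex.I * l * x) * v x

/-- `Φ(λ) = ∫₀^π (∫₀^x e^{-iλ(x−t)} conj(v(t)) dt) v(x) dx`. -/
noncomputable def PhiFun (v : ℝ → ℂ) (l : ℂ) : ℂ :=
  ∫ x in (0:ℝ)..Real.pi,
    (∫ t in (0:ℝ)..x, Complex.exp (-Complex.I * l * (x - t)) * (starRingEnd ℂ) (v t)) * v x

/-- `Δ(0,λ) = 2(1 − cos πλ)`. -/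
noncomputable def Delta0 (l : ℂ) : ℂ := 2 * (1 - Complex.cos (Real.pi * l))

/-- `R(λ) = (1 − e^{-iλπ})(Φ(λ)(1 − e^{iλπ}) − ṽ(λ)ṽ*(λ))`. -/
noncomputable def Rfun (v : ℝ → ℂ) (l : ℂ) : ℂ :=
  (1 - Complex.exp (-Complex.I * l * Real.pi)) *
    (PhiFun v l * (1 - Complex.exp (Complex.I * l * Real.pi))
      - ftilde v l * (starRingEnd ℂ) (ftilde v ((starRingEnd ℂ) l)))

/-- `W(λ)`, `N(λ)`, `F(λ)`, `G(λ)` from the characteristic determinant. -/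
noncomputable def Wfun (v : ℝ → ℂ) (l : ℂ) : ℂ :=
  (∫ x in (0:ℝ)..Real.pi, (Complex.sin (l * x) / l) * (starRingEnd ℂ) (v x))
    + ∫ x in (0:ℝ)..Real.pi,
        (Complex.sin (l * ((Real.pi : ℂ) - x)) / l) * (starRingEnd ℂ) (v x)

noncomputable def Nfun (v : ℝ → ℂ) (l : ℂ) : ℂ :=
  ∫ t in (0:ℝ)..Real.pi,
    (Complex.cos (l * t) - Complex.cos (l * ((Real.pi : ℂ) - t))) * v t

noncomputable def Ffun (v : ℝ → ℂ) (l : ℂ) : ℂ :=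
  ∫ x in (0:ℝ)..Real.pi,
    (Complex.sin (l * ((Real.pi : ℂ) - x)) / l)
      * (∫ t in (0:ℝ)..x, Complex.cos (l * t) * v t) * (starRingEnd ℂ) (v x)

noncomputable def Gfun (v : ℝ → ℂ) (l : ℂ) : ℂ :=
  ∫ x in (0:ℝ)..Real.pi,
    (∫ t in (0:ℝ)..x, (Complex.sin (l * ((x : ℂ) - t)) / l) * v t) * (starRingEnd ℂ) (v x)

open Set Real Complex ComplexConjugate

theorem intervalIntegrable_of_memLp_Ioo {E : Type*} [NormedAddCommGroup E] {f : ℝ → E}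
    {a b : ℝ} {p : ENNReal} (hab : a ≤ b) (hp : 1 ≤ p)
    (hf : MemLp f p (volume.restrict (Ioo a b))) : IntervalIntegrable f volume a b := by
  have : IsFiniteMeasure (volume.restrict (Ioo a b)) := by
    rw [isFiniteMeasure_restrict]; exact measure_Ioo_lt_top.ne
  exact (intervalIntegrable_iff_integrableOn_Ioo_of_le hab).2 (hf.integrable hp)

section Primitive

variable {𝕜 : Type*} [RCLike 𝕜] {f g : ℝ → 𝕜} {a b : ℝ}

theorem IntervalIntegrable.primitive_mul (hf : IntervalIntegrable f volume a b)
    (hg : IntervalIntegrable g volume a b) :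
    IntervalIntegrable (fun x => (∫ t in a..x, g t) * f x) volume a b :=
  hf.continuousOn_mul (continuousOn_primitive_interval' hg left_mem_uIcc)

theorem integral_primitive_mul_add_integral_primitive_mul (hab : a ≤ b)
    (hf : IntervalIntegrable f volume a b) (hg : IntervalIntegrable g volume a b) :
    (∫ x in a..b, (∫ t in a..x, g t) * f x) + (∫ x in a..b, (∫ t in a..x, f t) * g x)
      = (∫ x in a..b, g x) * (∫ x in a..b, f x) := by
  set μ := volume.restrict (Ioc a b)
  have hfμ : Integrable f μ := (intervalIntegrable_iff_integrableOn_Ioc_of_le hab).1 hf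
  have hgμ : Integrable g μ := (intervalIntegrable_iff_integrableOn_Ioc_of_le hab).1 hg
  have hF : Integrable (Function.uncurry fun x t => (Iic x).indicator g t * f x) (μ.prod μ) := by
    refine ((hfμ.mul_prod hgμ).indicator
      (measurableSet_le measurable_snd measurable_fst)).congr (.of_forall ?_)
    rintro ⟨x, t⟩
    by_cases h : t ≤ x <;> simp [indicator_apply, h, mul_comm]
  have integral_dt : ∀ x ∈ Ioc a b, ∫ t, (Iic x).indicator g t * f x ∂μ
      = (∫ t in a..x, g t) * f x := fun x hx => by
    rw [MeasureTheory.integral_mul_const, MeasureTheory.integral_indicator measurableSet_Iic,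
      Measure.restrict_restrict measurableSet_Iic, Iic_inter_Ioc_of_le hx.2,
      intervalIntegral.integral_of_le hx.1.le]
  have integral_dx : ∀ t ∈ Ioc a b, ∫ x, (Iic x).indicator g t * f x ∂μ
      = g t * (∫ x in a..b, f x) - (∫ x in a..t, f x) * g t := fun t ht => by
    have hind : (fun x => (Iic x).indicator g t * f x)
        = (Ici t).indicator (fun x => g t * f x) := by
      funext x; by_cases h : t ≤ x <;> simp [h]
    have hset : Ici t ∩ Ioc a b = Icc t b := by
      ext x; simp only [mem_inter_iff, mem_Ici, mem_Ioc, mem_Icc]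
      constructor
      · rintro ⟨htx, -, hxb⟩; exact ⟨htx, hxb⟩
      · rintro ⟨htx, hxb⟩; exact ⟨htx, ht.1.trans_le htx, hxb⟩
    rw [hind, MeasureTheory.integral_indicator measurableSet_Ici,
      Measure.restrict_restrict measurableSet_Ici, hset, MeasureTheory.integral_const_mul,
      integral_Icc_eq_integral_Ioc,
      ← intervalIntegral.integral_of_le ht.2,
      ← intervalIntegral.integral_interval_sub_left hf (hf.mono_set (uIcc_subset_uIcc_left
        (mem_uIcc_of_le ht.1.le ht.2)))]
    ring
  have hswap := integral_integral_swap hF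
  rw [setIntegral_congr_fun measurableSet_Ioc integral_dt,
    setIntegral_congr_fun measurableSet_Ioc integral_dx,
    integral_sub (hgμ.mul_const _)
      ((intervalIntegrable_iff_integrableOn_Ioc_of_le hab).1 (hg.primitive_mul hf)),
    MeasureTheory.integral_mul_const,
    ← intervalIntegral.integral_of_le hab, ← intervalIntegral.integral_of_le hab,
    ← intervalIntegral.integral_of_le hab] at hswap
  linear_combination hswap

end Primitive

noncomputable def expMoment (f : ℝ → ℂ) (μ : ℂ) : ℂ :=
  ∫ x in (0:ℝ)..π, cexp (μ * x) * f x

noncomputable def iteratedExpMoment (f g : ℝ → ℂ) (μ ν : ℂ) : ℂ :=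
  ∫ x in (0:ℝ)..π, (∫ t in (0:ℝ)..x, cexp (ν * t) * g t) * (cexp (μ * x) * f x)

section ExpMoments

variable {f g : ℝ → ℂ}

theorem IntervalIntegrable.cexp_mul {a b : ℝ} (hf : IntervalIntegrable f volume a b) (μ : ℂ) :
    IntervalIntegrable (fun x => cexp (μ * x) * f x) volume a b :=
  hf.continuousOn_mul (by fun_prop)

theorem iteratedExpMoment_add_swap (hf : IntervalIntegrable f volume 0 π)
    (hg : IntervalIntegrable g volume 0 π) (μ ν : ℂ) :
    iteratedExpMoment f g μ ν + iteratedExpMoment g f ν μ = expMoment g ν * expMoment f μ :=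
  integral_primitive_mul_add_integral_primitive_mul pi_nonneg (hf.cexp_mul μ) (hg.cexp_mul ν)

theorem integral_mul_eq_sum_expMoment {K : ℝ → ℂ} {ι : Type*} (s : Finset ι) (c μ : ι → ℂ)
    (hK : ∀ x, K x = ∑ i ∈ s, c i * cexp (μ i * x)) (hf : IntervalIntegrable f volume 0 π) :
    ∫ x in (0:ℝ)..π, K x * f x = ∑ i ∈ s, c i * expMoment f (μ i) := by
  simp_rw [hK, Finset.sum_mul, mul_assoc]
  rw [integral_finsetSum fun i _ => (hf.cexp_mul (μ i)).const_mul (c i)]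
  simp_rw [intervalIntegral.integral_const_mul, expMoment]

theorem integral_primitive_mul_eq_sum_iteratedExpMoment {K : ℝ → ℝ → ℂ} {ι : Type*}
    (s : Finset ι) (c μ ν : ι → ℂ)
    (hK : ∀ x t, K x t = ∑ i ∈ s, c i * cexp (μ i * x) * cexp (ν i * t))
    (hf : IntervalIntegrable f volume 0 π) (hg : IntervalIntegrable g volume 0 π) :
    ∫ x in (0:ℝ)..π, (∫ t in (0:ℝ)..x, K x t * g t) * f x
      = ∑ i ∈ s, c i * iteratedExpMoment f g (μ i) (ν i) := by
  have hsplit : ∀ x ∈ uIcc 0 π, (∫ t in (0:ℝ)..x, K x t * g t) * f x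
      = ∑ i ∈ s, c i * ((∫ t in (0:ℝ)..x, cexp (ν i * t) * g t) * (cexp (μ i * x) * f x)) := by
    intro x hx
    have hgx : IntervalIntegrable g volume 0 x := hg.mono_set (uIcc_subset_uIcc_left hx)
    simp_rw [hK, Finset.sum_mul, mul_assoc]
    rw [integral_finsetSum fun i _ => ((hgx.cexp_mul (ν i)).const_mul _).const_mul _,
      Finset.sum_mul]
    refine Finset.sum_congr rfl fun i _ => ?_
    rw [intervalIntegral.integral_const_mul, intervalIntegral.integral_const_mul]
    ring
  rw [integral_congr hsplit, integral_finsetSum fun i _ =>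
    ((hf.cexp_mul (μ i)).primitive_mul (hg.cexp_mul (ν i))).const_mul (c i)]
  simp_rw [intervalIntegral.integral_const_mul, iteratedExpMoment]

end ExpMoments

theorem sin_mul_div_eq (m z : ℂ) :
    Complex.sin (m * z) / m = (2 * I * m)⁻¹ * (cexp (I * m * z) - cexp (-(I * m) * z)) := by
  rw [Complex.sin, show I * m * z = m * z * I by ring, show -(I * m) * z = -(m * z) * I by ring,
    mul_inv, mul_inv, inv_I]
  ring

theorem cos_mul_eq (m z : ℂ) :
    Complex.cos (m * z) = 2⁻¹ * (cexp (I * m * z) + cexp (-(I * m) * z)) := by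
  rw [Complex.cos, show I * m * z = m * z * I by ring, show -(I * m) * z = -(m * z) * I by ring]
  ring

section Kernels

variable {m : ℂ} {f g : ℝ → ℂ}

theorem integral_sin_mul_div_mul (hf : IntervalIntegrable f volume 0 π) :
    ∫ x in (0:ℝ)..π, Complex.sin (m * x) / m * f x
      = (2 * I * m)⁻¹ * (expMoment f (I * m) - expMoment f (-(I * m))) := by
  rw [integral_mul_eq_sum_expMoment Finset.univ ![(2 * I * m)⁻¹, -(2 * I * m)⁻¹]
    ![I * m, -(I * m)] (fun x => ?_) hf]
  · simp only [Fin.sum_univ_two, Matrix.cons_val_zero, Matrix.cons_val_one]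
    ring
  · simp only [Fin.sum_univ_two, Matrix.cons_val_zero, Matrix.cons_val_one, sin_mul_div_eq]
    ring

theorem integral_sin_mul_pi_sub_div_mul (hf : IntervalIntegrable f volume 0 π) :
    ∫ x in (0:ℝ)..π, Complex.sin (m * (π - x)) / m * f x
      = (2 * I * m)⁻¹ * (cexp (I * m * π) * expMoment f (-(I * m))
          - cexp (-(I * m) * π) * expMoment f (I * m)) := by
  rw [integral_mul_eq_sum_expMoment Finset.univ
    ![(2 * I * m)⁻¹ * cexp (I * m * π), -(2 * I * m)⁻¹ * cexp (-(I * m) * π)]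
    ![-(I * m), I * m] (fun x => ?_) hf]
  · simp only [Fin.sum_univ_two, Matrix.cons_val_zero, Matrix.cons_val_one]
    ring
  · rw [sin_mul_div_eq]
    simp only [Fin.sum_univ_two, Matrix.cons_val_zero, Matrix.cons_val_one, mul_sub, neg_mul,
      Complex.exp_sub, Complex.exp_neg, div_inv_eq_mul]
    ring

theorem integral_cos_mul_sub_cos_mul_pi_sub_mul (hf : IntervalIntegrable f volume 0 π) :
    ∫ t in (0:ℝ)..π, (Complex.cos (m * t) - Complex.cos (m * (π - t))) * f t
      = 2⁻¹ * ((1 - cexp (-(I * m) * π)) * expMoment f (I * m)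
          + (1 - cexp (I * m * π)) * expMoment f (-(I * m))) := by
  rw [integral_mul_eq_sum_expMoment Finset.univ
    ![2⁻¹ * (1 - cexp (-(I * m) * π)), 2⁻¹ * (1 - cexp (I * m * π))]
    ![I * m, -(I * m)] (fun x => ?_) hf]
  · simp only [Fin.sum_univ_two, Matrix.cons_val_zero, Matrix.cons_val_one]
    ring
  · rw [cos_mul_eq, cos_mul_eq]
    simp only [Fin.sum_univ_two, Matrix.cons_val_zero, Matrix.cons_val_one, mul_sub, neg_mul,
      Complex.exp_sub, Complex.exp_neg, div_inv_eq_mul]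
    ring

theorem integral_primitive_cexp_mul (hf : IntervalIntegrable f volume 0 π)
    (hg : IntervalIntegrable g volume 0 π) :
    ∫ x in (0:ℝ)..π, (∫ t in (0:ℝ)..x, cexp (-I * m * (x - t)) * g t) * f x
      = iteratedExpMoment f g (-(I * m)) (I * m) := by
  rw [integral_primitive_mul_eq_sum_iteratedExpMoment Finset.univ ![1] ![-(I * m)] ![I * m]
    (fun x t => ?_) hf hg]
  · simp only [Fin.sum_univ_one, Matrix.cons_val_zero, one_mul]
  · simp only [Fin.sum_univ_one, Matrix.cons_val_zero, one_mul, ← Complex.exp_add]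
    congr 1
    ring

theorem integral_primitive_sin_mul_sub_div_mul (hf : IntervalIntegrable f volume 0 π)
    (hg : IntervalIntegrable g volume 0 π) :
    ∫ x in (0:ℝ)..π, (∫ t in (0:ℝ)..x, Complex.sin (m * (x - t)) / m * g t) * f x
      = (2 * I * m)⁻¹ * (iteratedExpMoment f g (I * m) (-(I * m))
          - iteratedExpMoment f g (-(I * m)) (I * m)) := by
  rw [integral_primitive_mul_eq_sum_iteratedExpMoment Finset.univ
    ![(2 * I * m)⁻¹, -(2 * I * m)⁻¹] ![I * m, -(I * m)] ![-(I * m), I * m]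
    (fun x t => ?_) hf hg]
  · simp only [Fin.sum_univ_two, Matrix.cons_val_zero, Matrix.cons_val_one]
    ring
  · rw [sin_mul_div_eq]
    simp only [Fin.sum_univ_two, Matrix.cons_val_zero, Matrix.cons_val_one, mul_sub, neg_mul,
      Complex.exp_sub, Complex.exp_neg, div_inv_eq_mul]
    ring

theorem integral_sin_mul_pi_sub_div_mul_primitive_cos_mul (hf : IntervalIntegrable f volume 0 π)
    (hg : IntervalIntegrable g volume 0 π) :
    ∫ x in (0:ℝ)..π,
        Complex.sin (m * (π - x)) / m * (∫ t in (0:ℝ)..x, Complex.cos (m * t) * g t) * f x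
      = (4 * I * m)⁻¹ *
          (cexp (I * m * π) * iteratedExpMoment f g (-(I * m)) (I * m)
            + cexp (I * m * π) * iteratedExpMoment f g (-(I * m)) (-(I * m))
            - cexp (-(I * m) * π) * iteratedExpMoment f g (I * m) (I * m)
            - cexp (-(I * m) * π) * iteratedExpMoment f g (I * m) (-(I * m))) := by
  have hmove : ∀ x : ℝ,
      Complex.sin (m * (π - x)) / m * (∫ t in (0:ℝ)..x, Complex.cos (m * t) * g t)
        = ∫ t in (0:ℝ)..x, Complex.sin (m * (π - x)) / m * Complex.cos (m * t) * g t := fun x => by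
    simp_rw [mul_assoc, ← intervalIntegral.integral_const_mul]
  simp_rw [hmove]
  rw [integral_primitive_mul_eq_sum_iteratedExpMoment Finset.univ
    ![(4 * I * m)⁻¹ * cexp (I * m * π), (4 * I * m)⁻¹ * cexp (I * m * π),
      -(4 * I * m)⁻¹ * cexp (-(I * m) * π), -(4 * I * m)⁻¹ * cexp (-(I * m) * π)]
    ![-(I * m), -(I * m), I * m, I * m] ![I * m, -(I * m), I * m, -(I * m)]
    (fun x t => ?_) hf hg]
  · simp only [Fin.sum_univ_four, Matrix.cons_val_zero, Matrix.cons_val_one, Matrix.cons_val_two,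
      Matrix.cons_val_three, Matrix.head_cons, Matrix.tail_cons]
    ring
  · rw [sin_mul_div_eq, cos_mul_eq]
    simp only [Fin.sum_univ_four, Matrix.cons_val_zero, Matrix.cons_val_one, Matrix.cons_val_two,
      Matrix.cons_val_three, Matrix.head_cons, Matrix.tail_cons, mul_sub, neg_mul,
      Complex.exp_sub, Complex.exp_neg, div_inv_eq_mul]
    ring

end Kernels

section Specializations

variable (v : ℝ → ℂ) (l : ℂ)

theorem ftilde_eq : ftilde v l = expMoment v (-(I * l)) := by
  simp only [ftilde, expMoment, neg_mul]

theorem conj_ftilde_conj : conj (ftilde v (conj l)) = expMoment (fun x => conj (v x)) (I * l) := by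
  rw [ftilde, ← intervalIntegral_conj, expMoment]
  refine integral_congr fun x _ => ?_
  simp only [map_mul, ← Complex.exp_conj, map_neg, conj_I, conj_conj, conj_ofReal, neg_neg]

theorem PhiFun_eq (hv : IntervalIntegrable v volume 0 π)
    (hv' : IntervalIntegrable (fun x => conj (v x)) volume 0 π) :
    PhiFun v l = iteratedExpMoment v (fun x => conj (v x)) (-(I * l)) (I * l) :=
  integral_primitive_cexp_mul hv hv'

theorem conj_Ffun_conj : conj (Ffun v (conj l)) = ∫ x in (0:ℝ)..π,
    Complex.sin (l * (π - x)) / l * (∫ t in (0:ℝ)..x, Complex.cos (l * t) * conj (v t)) * v x := by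
  rw [Ffun, ← intervalIntegral_conj]
  refine integral_congr fun x _ => ?_
  simp only [map_mul, map_div₀, ← intervalIntegral_conj, ← Complex.sin_conj, ← Complex.cos_conj,
    map_sub, conj_conj, conj_ofReal]

theorem Delta0_eq : Delta0 l = (1 - cexp (I * l * π)) * (1 - cexp (-(I * l) * π)) := by
  have hinv : cexp (I * l * π) * cexp (-(I * l) * π) = 1 := by
    rw [← Complex.exp_add, neg_mul, add_neg_cancel, Complex.exp_zero]
  rw [Delta0, Complex.cos, show (π : ℂ) * l * I = I * l * π by ring,
    show -((π : ℂ) * l) * I = -(I * l) * π by ring]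
  linear_combination -hinv

end Specializations

theorem stmt4_general (v : ℝ → ℂ)
    (hv : MemLp v 2 (volume.restrict (Set.Ioo (0:ℝ) Real.pi)))
    (α : ℝ) (l : ℂ) (hD : Delta0 l ≠ 0) :
    Delta0 l + 2 * (α : ℂ) *
        (Wfun v l * Nfun v l / Delta0 l - Ffun v l
          - (starRingEnd ℂ) (Ffun v ((starRingEnd ℂ) l)) - Gfun v l)
      = Delta0 l + ((α : ℂ) / (2 * Complex.I * l)) * (Rfun v l - Rfun v (-l)) := by
  have hv₁ : IntervalIntegrable v volume 0 π :=
    intervalIntegrable_of_memLp_Ioo pi_nonneg one_le_two hv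
  have hv₂ : IntervalIntegrable (fun x => conj (v x)) volume 0 π :=
    intervalIntegrable_of_memLp_Ioo pi_nonneg one_le_two hv.star
  rw [conj_Ffun_conj, Wfun, Nfun, Ffun, Gfun, Rfun, Rfun, PhiFun_eq v l hv₁ hv₂,
    PhiFun_eq v (-l) hv₁ hv₂, conj_ftilde_conj, conj_ftilde_conj, ftilde_eq, ftilde_eq,
    integral_sin_mul_div_mul hv₂, integral_sin_mul_pi_sub_div_mul hv₂,
    integral_cos_mul_sub_cos_mul_pi_sub_mul hv₁,
    integral_sin_mul_pi_sub_div_mul_primitive_cos_mul hv₂ hv₁,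
    integral_sin_mul_pi_sub_div_mul_primitive_cos_mul hv₁ hv₂,
    integral_primitive_sin_mul_sub_div_mul hv₂ hv₁]
  have hswap μ ν := eq_sub_of_add_eq (iteratedExpMoment_add_swap hv₁ hv₂ μ ν)
  rw [Delta0_eq] at hD ⊢
  simp only [hswap, mul_neg, neg_mul, neg_neg, Complex.exp_neg] at hD ⊢
  have hP : cexp (I * l * π) ≠ 0 := Complex.exp_ne_zero _
  generalize cexp (I * l * π) = P at hP hD ⊢
  have hP₁ : P ≠ 1 := by rintro rfl; simp at hD
  field_simp [sub_ne_zero.2 hP₁, sub_ne_zero.2 hP₁.symm]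
  ring

theorem stmt4 (v : ℝ → ℂ)
    (hv : MemLp v 2 (volume.restrict (Set.Ioo (0:ℝ) Real.pi)))
    (α : ℝ) (l : ℂ) (hl : l ≠ 0) (hD : Delta0 l ≠ 0) :
    Delta0 l + 2 * (α : ℂ) *
        (Wfun v l * Nfun v l / Delta0 l - Ffun v l
          - (starRingEnd ℂ) (Ffun v ((starRingEnd ℂ) l)) - Gfun v l)
      = Delta0 l + ((α : ℂ) / (2 * Complex.I * l)) * (Rfun v l - Rfun v (-l)) :=
  stmt4_general v hv α l hD
end

section
/- Let v ∈ L²((0,π), ℂ), α ∈ ℝ, and let p ≥ 1 be an integer. Define the Fourier coefficients c_p = ∫₀^π v(x)·√(2/π)·cos(2px) dx and s_p = ∫₀^π v(x)·√(2/π)·sin(2px) dx. Then the function λ ↦ Δ(α,λ) is differentiable at λ = 2p with derivative Δ'(α,2p) = −(π²/(4p))·α·(|c_p|² + |s_p|²); equivalently, α·(|c_p|² + |s_p|²) = −(4p/π²)·Δ'(α,2p). -/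
open MeasureTheory intervalIntegral

/-- `Δ(α,λ) = Δ(0,λ) + (α/(2iλ))(R(λ) − R(−λ))`. -/
noncomputable def DeltaA (v : ℝ → ℂ) (α : ℝ) (l : ℂ) : ℂ :=
  Delta0 l + ((α : ℂ) / (2 * Complex.I * l)) * (Rfun v l - Rfun v (-l))

/-!
At `λ = 2p` both `e^{±iλπ}` equal `1`, so `R(±2p) = 0`, `Δ(0, ·)' (2p) = 2π sin(2πp) = 0`, and in
`R = (1 - e^{-iλπ}) ((1 - e^{iλπ}) Φ - ṽ ṽ*)` only the derivative of the first factor survives: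
`R'(±2p) = -iπ |ṽ(±2p)|²`. Hence `Δ'(α, 2p) = (α / (4ip)) (-iπ) (|ṽ(2p)|² + |ṽ(-2p)|²)`. Writing
`a, b` for the cosine and sine integrals of `v` at frequency `2p`, `ṽ(±2p) = a ∓ ib`, and the
parallelogram law gives `|ṽ(2p)|² + |ṽ(-2p)|² = 2(|a|² + |b|²) = π(|c_p|² + |s_p|²)`.
-/

open Filter Set Complex
open scoped Topology Real

theorem HasDerivAt.mul_of_eq_zero_of_continuousAt {𝕜 : Type*} [NontriviallyNormedField 𝕜]
    {f g : 𝕜 → 𝕜} {x f' : 𝕜} (hf : HasDerivAt f f' x) (hfx : f x = 0)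
    (hg : ContinuousAt g x) : HasDerivAt (fun y => f y * g y) (f' * g x) x := by
  rw [hasDerivAt_iff_tendsto_slope] at hf ⊢
  have hslope : slope f x * g = slope (fun y => f y * g y) x := by
    ext y
    simp only [Pi.mul_apply, slope_def_field, hfx, zero_mul, sub_zero]
    ring
  exact hslope ▸ hf.mul (hg.tendsto.mono_left nhdsWithin_le_nhds)

theorem eventually_norm_lt_norm_add_one {E : Type*} [SeminormedAddCommGroup E] (μ : E) :
    ∀ᶠ l in 𝓝 μ, ‖l‖ < ‖μ‖ + 1 :=
  continuous_norm.continuousAt.eventually_lt continuousAt_const (lt_add_one _)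

theorem norm_cexp_neg_I_mul_le {l : ℂ} {x B : ℝ} (hl : ‖l‖ ≤ B) (hx : |x| ≤ π) :
    ‖cexp (-I * l * x)‖ ≤ Real.exp (π * B) := by
  refine (norm_exp_le_exp_norm _).trans (Real.exp_le_exp.mpr ?_)
  rw [norm_mul, norm_mul, norm_neg, norm_I, one_mul, norm_real, Real.norm_eq_abs, mul_comm]
  exact mul_le_mul hx hl (norm_nonneg _) Real.pi_pos.le

theorem cexp_I_mul_two_mul_int_mul_pi (n : ℤ) : cexp (I * (2 * n) * π) = 1 := by
  rw [show I * (2 * n) * π = n * (2 * π * I) by ring]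
  exact exp_int_mul_two_pi_mul_I n

section

variable {v : ℝ → ℂ}

theorem continuous_ftilde (hv : IntervalIntegrable v volume 0 π) :
    Continuous (ftilde v) := by
  refine continuous_iff_continuousAt.mpr fun μ => ?_
  refine intervalIntegral.continuousAt_of_dominated_interval
    (bound := fun x => Real.exp (π * (‖μ‖ + 1)) * ‖v x‖) ?_ ?_ (hv.norm.const_mul _) ?_
  · exact .of_forall fun l =>
      (Continuous.aestronglyMeasurable (by fun_prop)).mul hv.def'.aestronglyMeasurable
  · filter_upwards [eventually_norm_lt_norm_add_one μ] with l hl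
    refine .of_forall fun x hx => ?_
    rw [uIoc_of_le Real.pi_pos.le] at hx
    rw [norm_mul]
    gcongr
    exact norm_cexp_neg_I_mul_le hl.le (abs_le.mpr ⟨by linarith [hx.1, Real.pi_pos], hx.2⟩)
  · exact .of_forall fun x _ => by fun_prop

theorem norm_PhiFun_le (hv : IntervalIntegrable v volume 0 π)
    {l : ℂ} {B : ℝ} (hl : ‖l‖ ≤ B) :
    ‖PhiFun v l‖ ≤ Real.exp (π * B) * (∫ t in 0..π, ‖v t‖) ^ 2 := by
  set K := Real.exp (π * B)
  set N := ∫ t in 0..π, ‖v t‖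
  have hKv : IntervalIntegrable (fun t => K * ‖v t‖) volume 0 π :=
    hv.norm.const_mul K
  have hinner : ∀ x ∈ Ioc 0 π,
      ‖∫ t in 0..x, cexp (-I * l * (x - t)) * (starRingEnd ℂ) (v t)‖ ≤ K * N := by
    intro x hx
    calc _ ≤ ∫ t in 0..x, K * ‖v t‖ := by
          refine intervalIntegral.norm_integral_le_of_norm_le hx.1.le (.of_forall fun t ht => ?_)
            (hKv.mono_set (uIcc_subset_uIcc_left
              (by rw [uIcc_of_le Real.pi_pos.le]; exact Ioc_subset_Icc_self hx)))
          rw [norm_mul, RCLike.norm_conj, ← ofReal_sub]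
          gcongr
          exact norm_cexp_neg_I_mul_le hl
            (abs_le.mpr ⟨by linarith [ht.2, Real.pi_pos], by linarith [ht.1, hx.2]⟩)
      _ ≤ ∫ t in 0..π, K * ‖v t‖ :=
          intervalIntegral.integral_mono_interval le_rfl hx.1.le hx.2
            (.of_forall fun t => by positivity) hKv
      _ = K * N := intervalIntegral.integral_const_mul K _
  calc ‖PhiFun v l‖ ≤ ∫ x in 0..π, K * N * ‖v x‖ :=
        intervalIntegral.norm_integral_le_of_norm_le Real.pi_pos.le
          (.of_forall fun x hx => by rw [norm_mul]; gcongr; exact hinner x hx)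
          (hv.norm.const_mul _)
    _ = K * N ^ 2 := by rw [intervalIntegral.integral_const_mul]; ring

-- `Φ` is only shown to be locally bounded: then `(1 - e^{iλπ}) Φ → 0` at `μ`, so `R` is
-- `1 - e^{-iλπ}` times a function continuous at `μ`.
theorem hasDerivAt_Rfun (hv : IntervalIntegrable v volume 0 π) {μ : ℂ}
    (hμ : cexp (I * μ * π) = 1) :
    HasDerivAt (Rfun v)
      (-(I * π) * (ftilde v μ * (starRingEnd ℂ) (ftilde v ((starRingEnd ℂ) μ)))) μ := by
  have hμ' : cexp (-I * μ * π) = 1 := by rw [neg_mul, neg_mul, exp_neg, hμ, inv_one]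
  set C := fun l : ℂ => 1 - cexp (I * l * π)
  set T := fun l => ftilde v l * (starRingEnd ℂ) (ftilde v ((starRingEnd ℂ) l))
  have hA : HasDerivAt (fun l : ℂ => 1 - cexp (-I * l * π)) (I * π) μ := by
    have h := (((hasDerivAt_id' μ).const_mul (-I)).mul_const (π : ℂ)).cexp.const_sub 1
    rw [hμ'] at h
    exact h.congr_deriv (by ring)
  have hT : Continuous T := by
    have := continuous_ftilde hv
    fun_prop
  have hCΦ : Tendsto (fun l => C l * PhiFun v l) (𝓝 μ) (𝓝 0) := by
    refine Tendsto.zero_mul_isBoundedUnder_le ?_ <| isBoundedUnder_of_eventually_le <|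
      (eventually_norm_lt_norm_add_one μ).mono fun l hl => norm_PhiFun_le hv hl.le
    simpa [C, hμ] using (show Continuous C by fun_prop).tendsto μ
  have hg : ContinuousAt (fun l => C l * PhiFun v l - T l) μ := by
    simpa [ContinuousAt, C, hμ] using hCΦ.sub hT.continuousAt
  have hR : Rfun v = fun l => (1 - cexp (-I * l * π)) * (C l * PhiFun v l - T l) := by
    funext l
    simp only [Rfun, C, T]
    ring
  rw [hR]
  refine (hA.mul_of_eq_zero_of_continuousAt (by rw [hμ', sub_self]) hg).congr_deriv ?_
  simp only [C, T, hμ, sub_self, zero_mul, zero_sub]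
  ring

theorem Rfun_eq_zero_of_cexp_eq_one {μ : ℂ} (hμ : cexp (I * μ * π) = 1) : Rfun v μ = 0 := by
  rw [Rfun, neg_mul, neg_mul, exp_neg, hμ, inv_one, sub_self, zero_mul]

theorem ftilde_eq_integral_cos_sub_integral_sin
    (hv : IntervalIntegrable v volume 0 π) (w : ℂ) :
    ftilde v w = (∫ x in 0..π, v x * cos (w * x))
      - (∫ x in 0..π, v x * sin (w * x)) * I := by
  have hcos := hv.mul_continuousOn (g := fun x : ℝ => cos (w * x)) (by fun_prop)
  have hsin := hv.mul_continuousOn (g := fun x : ℝ => sin (w * x)) (by fun_prop)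
  rw [← intervalIntegral.integral_mul_const, ← intervalIntegral.integral_sub hcos
    (hsin.mul_const I), ftilde]
  refine intervalIntegral.integral_congr fun x _ => ?_
  rw [show -I * w * x = -(w * x) * I by ring, exp_mul_I, cos_neg, sin_neg]
  ring

theorem norm_ftilde_sq_add_norm_ftilde_neg_sq
    (hv : IntervalIntegrable v volume 0 π) (w : ℂ) :
    ‖ftilde v w‖ ^ 2 + ‖ftilde v (-w)‖ ^ 2 =
      2 * (‖∫ x in 0..π, v x * cos (w * x)‖ ^ 2
        + ‖∫ x in 0..π, v x * sin (w * x)‖ ^ 2) := by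
  simp only [ftilde_eq_integral_cos_sub_integral_sin hv, neg_mul, cos_neg, sin_neg, mul_neg,
    intervalIntegral.integral_neg, sub_neg_eq_add]
  have := parallelogram_law_with_norm ℝ (∫ x in 0..π, v x * cos (w * x))
    ((∫ x in 0..π, v x * sin (w * x)) * I)
  rw [norm_mul, norm_I, mul_one] at this
  linear_combination this

theorem hasDerivAt_DeltaA_two_mul_int (hv : IntervalIntegrable v volume 0 π)
    (α : ℝ) {n : ℤ} (hn : n ≠ 0) :
    HasDerivAt (DeltaA v α)
      (-((α : ℂ) * π / (2 * n)) *
        ((‖∫ x in 0..π, v x * cos (2 * n * x)‖ ^ 2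
          + ‖∫ x in 0..π, v x * sin (2 * n * x)‖ ^ 2 : ℝ) : ℂ))
      (2 * n) := by
  set μ : ℂ := 2 * n
  have hμ0 : μ ≠ 0 := by simp [μ, hn]
  have hμ : cexp (I * μ * π) = 1 := cexp_I_mul_two_mul_int_mul_pi n
  have hnegμ : cexp (I * -μ * π) = 1 := by
    rw [show -μ = 2 * (-n : ℤ) by push_cast; ring]
    exact cexp_I_mul_two_mul_int_mul_pi _
  have hconj : (starRingEnd ℂ) μ = μ := by rw [map_mul, map_ofNat, map_intCast]
  have hR : HasDerivAt (fun l => Rfun v l - Rfun v (-l))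
      (-(I * π) * (‖ftilde v μ‖ ^ 2 + ‖ftilde v (-μ)‖ ^ 2 : ℝ)) μ := by
    have hRμ := hasDerivAt_Rfun hv hμ
    have hRnegμ := (hasDerivAt_Rfun hv hnegμ).comp μ (hasDerivAt_neg' μ)
    refine (hRμ.sub hRnegμ).congr_deriv ?_
    simp only [hconj, map_neg, mul_conj']
    push_cast
    ring
  have hR0 : Rfun v μ - Rfun v (-μ) = 0 := by
    rw [Rfun_eq_zero_of_cexp_eq_one hμ, Rfun_eq_zero_of_cexp_eq_one hnegμ, sub_self]
  have hcoeff : ContinuousAt (fun l : ℂ => (α : ℂ) / (2 * I * l)) μ :=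
    continuousAt_const.div (by fun_prop) (by simp [hμ0])
  have hΔ0 : HasDerivAt Delta0 0 μ := by
    have hsin : sin (π * μ) = 0 := by
      rw [show (π : ℂ) * μ = (2 * n : ℤ) * π by push_cast; ring]
      exact sin_int_mul_pi _
    have h := ((((hasDerivAt_id' μ).const_mul (π : ℂ)).ccos).const_sub 1).const_mul 2
    rw [hsin] at h
    exact h.congr_deriv (by ring)
  have hDelta : DeltaA v α = fun l => Delta0 l + (Rfun v l - Rfun v (-l)) * (α / (2 * I * l)) :=
    funext fun l => by rw [DeltaA, mul_comm]
  rw [hDelta]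
  refine (hΔ0.add (hR.mul_of_eq_zero_of_continuousAt hR0 hcoeff)).congr_deriv ?_
  rw [norm_ftilde_sq_add_norm_ftilde_neg_sq hv]
  push_cast
  field_simp
  ring

end

theorem stmt16 (v : ℝ → ℂ)
    (hv : MemLp v 2 (volume.restrict (Set.Ioo (0:ℝ) Real.pi)))
    (α : ℝ) (p : ℕ) (hp : 1 ≤ p)
    (c s : ℂ)
    (hc : c = ∫ x in (0:ℝ)..Real.pi,
      v x * ((Real.sqrt (2 / Real.pi) : ℂ) * Complex.cos (2 * (p : ℂ) * x)))
    (hs : s = ∫ x in (0:ℝ)..Real.pi,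
      v x * ((Real.sqrt (2 / Real.pi) : ℂ) * Complex.sin (2 * (p : ℂ) * x))) :
    HasDerivAt (fun l : ℂ => DeltaA v α l)
      (-(((Real.pi : ℂ) ^ 2 / (4 * (p : ℂ))) * (α : ℂ) *
        (((‖c‖ : ℝ) : ℂ) ^ 2 + ((‖s‖ : ℝ) : ℂ) ^ 2)))
      (2 * (p : ℂ)) := by
  have hvI : IntervalIntegrable v volume 0 π :=
    (intervalIntegrable_iff_integrableOn_Ioo_of_le Real.pi_pos.le).mpr
      (hv.integrable one_le_two)
  have hnorm : ∀ f : ℝ → ℂ,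
      ‖∫ x in 0..π, v x * ((Real.sqrt (2 / π) : ℂ) * f x)‖ ^ 2
        = 2 / π * ‖∫ x in 0..π, v x * f x‖ ^ 2 := fun f => by
    simp only [mul_left_comm (v _), intervalIntegral.integral_const_mul, norm_mul, norm_real,
      Real.norm_eq_abs, mul_pow, sq_abs]
    rw [Real.sq_sqrt (by positivity)]
  have key := hasDerivAt_DeltaA_two_mul_int hvI α (n := p) (by omega)
  simp only [Int.cast_natCast] at key
  refine key.congr_deriv ?_
  rw [hc, hs]
  simp only [← ofReal_pow, hnorm]
  push_cast
  field_simp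
  ring
end
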